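/- arXiv:2502.04664 — 5 statements merged into one kernel-verified Lean document; each statement's English description precedes it below -/
import Mathlib

section
/- For any s in the probability simplex Δ^{k-1}, any index c ∈ [k], and any vector v ∈ ℝ^k, the quadratic form vᵀ(diag(s) - s sᵀ)v is at most 4(1 - s_c)·‖v vᵀ‖, where ‖·‖ is any entry-wise or Schatten p-norm with p ≥ 1. -/
open scoped BigOperators
open Matrix

/-- The singular values of a real matrix `A`, defined as the square roots of the
eigenvalues of the Hermitian matrix `Aᵀ * A` (indexed by columns). -/
noncomputable def singularValues {m n : ℕ} (A : Matrix (Fin m) (Fin n) ℝ) : Fin n → ℝ :=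
  fun i => Real.sqrt ((Matrix.isHermitian_conjTranspose_mul_self A).eigenvalues i)

private lemma quad_eq {k : ℕ} (s v : Fin k → ℝ) :
    v ⬝ᵥ ((Matrix.diagonal s - Matrix.vecMulVec s s) *ᵥ v) =
      (∑ i, s i * v i ^ 2) - (∑ i, s i * v i) ^ 2 := by
  have h : ∀ i : Fin k,
      v i * (∑ j, ((Matrix.diagonal s - Matrix.vecMulVec s s) i j * v j)) =
      s i * v i ^ 2 - (s i * v i) * ∑ j, s j * v j := by
    intro i
    have : ∀ j : Fin k, (Matrix.diagonal s - Matrix.vecMulVec s s) i j * v j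
        = (if i = j then s i * v j else 0) - s i * (s j * v j) := by
      intro j
      simp [Matrix.sub_apply, Matrix.diagonal_apply, Matrix.vecMulVec_apply, sub_mul, ite_mul]
      ring
    simp only [this, Finset.sum_sub_distrib, Finset.sum_ite_eq, Finset.mem_univ, if_true,
      ← Finset.mul_sum]
    ring
  simp only [dotProduct, Matrix.mulVec, dotProduct, h,
    Finset.sum_sub_distrib, ← Finset.sum_mul]
  ring

private lemma trace_eq_sum_eigs {n : Type*} [Fintype n] [DecidableEq n] (A : Matrix n n ℝ)
    (hA : A.IsHermitian) : A.trace = ∑ i, hA.eigenvalues i := by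
  simpa using hA.trace_eq_sum_eigenvalues

private lemma eig_dichotomy {n : Type*} [Fintype n] [DecidableEq n] (M : Matrix n n ℝ)
    (hM : M.IsHermitian) (c : ℝ) (h : M * M = c • M) (j : n) :
    hM.eigenvalues j = 0 ∨ hM.eigenvalues j = c := by
  set x := hM.eigenvectorBasis j with hx
  have h1 := hM.mulVec_eigenvectorBasis j
  have h2 : (hM.eigenvalues j * hM.eigenvalues j) • ⇑x = (c * hM.eigenvalues j) • ⇑x := by
    have : M *ᵥ (M *ᵥ ⇑x) = (hM.eigenvalues j * hM.eigenvalues j) • ⇑x := by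
      rw [h1, Matrix.mulVec_smul, h1, smul_smul]
    rw [Matrix.mulVec_mulVec, h, Matrix.smul_mulVec, h1, smul_smul] at this
    rw [← this]
  have hxne0 : x ≠ 0 := by
    have h3 := hM.eigenvectorBasis.toBasis.ne_zero j
    rwa [show hM.eigenvectorBasis.toBasis j = x from congrFun hM.eigenvectorBasis.coe_toBasis j]
      at h3
  have hxne : (WithLp.equiv 2 (n → ℝ)) x ≠ 0 := by
    intro hzero
    exact hxne0 ((WithLp.equiv 2 (n → ℝ)).injective (by simpa using hzero))
  obtain ⟨i, hi⟩ := Function.ne_iff.mp hxne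
  have h4 := congrFun h2 i
  simp only [Pi.smul_apply, smul_eq_mul] at h4
  have hl : hM.eigenvalues j * hM.eigenvalues j = c * hM.eigenvalues j :=
    mul_right_cancel₀ (by simpa using hi) h4
  have : hM.eigenvalues j * (hM.eigenvalues j - c) = 0 := by ring_nf; linarith
  rcases mul_eq_zero.mp this with h' | h'
  · exact Or.inl h'
  · exact Or.inr (by linarith)

/-- For `s` in the probability simplex, any class `c`, and any `v ∈ ℝ^k`, the
quadratic form `vᵀ (diag(s) - s sᵀ) v` is at most `4 (1 - s_c) ‖v vᵀ‖`, where `‖·‖`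
is any entry-wise `p`-norm or Schatten `p`-norm with `p ≥ 1`. -/
theorem quadratic_form_bound {k : ℕ} (s : Fin k → ℝ) (hs : ∀ i, 0 ≤ s i)
    (hsum : ∑ i, s i = 1) (c : Fin k) (v : Fin k → ℝ) (p : ℝ) (hp : 1 ≤ p) :
    v ⬝ᵥ ((Matrix.diagonal s - Matrix.vecMulVec s s) *ᵥ v) ≤
      4 * (1 - s c) * ((∑ i, ∑ j, |v i * v j| ^ p) ^ (1 / p)) ∧
    v ⬝ᵥ ((Matrix.diagonal s - Matrix.vecMulVec s s) *ᵥ v) ≤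
      4 * (1 - s c) * ((∑ i, singularValues (Matrix.vecMulVec v v) i ^ p) ^ (1 / p)) := by
  have hp0 : p ≠ 0 := by positivity
  obtain ⟨m, -, hm⟩ := Finset.exists_max_image Finset.univ (fun i => v i ^ 2)
    ⟨c, Finset.mem_univ c⟩
  simp only [Finset.mem_univ, forall_const] at hm
  have hsc : s c ≤ 1 := hsum ▸ Finset.single_le_sum (fun i _ => hs i) (Finset.mem_univ c)
  have hfac : (0:ℝ) ≤ 4 * (1 - s c) := by linarith
  -- the key quadratic form bound
  have key : v ⬝ᵥ ((Matrix.diagonal s - Matrix.vecMulVec s s) *ᵥ v)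
      ≤ 4 * (1 - s c) * v m ^ 2 := by
    rw [quad_eq]
    have step1 : (∑ i, s i * v i ^ 2) - (∑ i, s i * v i) ^ 2
        ≤ ∑ i, s i * (v i - v c) ^ 2 := by
      have expand : ∑ i, s i * (v i - v c) ^ 2
          = (∑ i, s i * v i ^ 2) - 2 * v c * (∑ i, s i * v i) + v c ^ 2 := by
        have : ∀ i : Fin k, s i * (v i - v c) ^ 2
            = s i * v i ^ 2 - 2 * v c * (s i * v i) + v c ^ 2 * s i := fun i => by ring
        simp only [this, Finset.sum_add_distrib, Finset.sum_sub_distrib, ← Finset.mul_sum, hsum]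
        ring
      rw [expand]
      nlinarith [sq_nonneg ((∑ i, s i * v i) - v c)]
    have step2 : ∑ i, s i * (v i - v c) ^ 2 ≤ 4 * (1 - s c) * v m ^ 2 := by
      have herase : ∑ i ∈ Finset.univ.erase c, s i = 1 - s c := by
        have := Finset.sum_erase_add Finset.univ s (Finset.mem_univ c)
        rw [hsum] at this; linarith
      have hsplit : ∑ i, s i * (v i - v c) ^ 2
          = ∑ i ∈ Finset.univ.erase c, s i * (v i - v c) ^ 2 := by
        rw [← Finset.sum_erase_add Finset.univ _ (Finset.mem_univ c)]
        simp
      rw [hsplit]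
      calc ∑ i ∈ Finset.univ.erase c, s i * (v i - v c) ^ 2
          ≤ ∑ i ∈ Finset.univ.erase c, s i * (4 * v m ^ 2) := by
            refine Finset.sum_le_sum fun i _ => ?_
            refine mul_le_mul_of_nonneg_left ?_ (hs i)
            nlinarith [hm i, hm c, sq_nonneg (v i + v c), sq_nonneg (v i - v c)]
        _ = 4 * (1 - s c) * v m ^ 2 := by rw [← Finset.sum_mul, herase]; ring
    linarith
  constructor
  · -- entrywise p-norm
    have hnorm : v m ^ 2 ≤ (∑ i, ∑ j, |v i * v j| ^ p) ^ (1 / p) := by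
      have h1 : v m ^ 2 = (|v m * v m| ^ p) ^ (1 / p) := by
        rw [one_div, Real.rpow_rpow_inv (abs_nonneg _) hp0, abs_mul_self, sq]
      rw [h1]
      apply Real.rpow_le_rpow (Real.rpow_nonneg (abs_nonneg _) p) _ (by positivity)
      calc |v m * v m| ^ p ≤ ∑ j, |v m * v j| ^ p :=
            Finset.single_le_sum (f := fun j => |v m * v j| ^ p)
              (fun j _ => Real.rpow_nonneg (abs_nonneg _) p) (Finset.mem_univ m)
        _ ≤ ∑ i, ∑ j, |v i * v j| ^ p :=
            Finset.single_le_sum (f := fun i => ∑ j, |v i * v j| ^ p)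
              (fun i _ => Finset.sum_nonneg fun j _ => Real.rpow_nonneg (abs_nonneg _) p)
              (Finset.mem_univ m)
    calc v ⬝ᵥ ((Matrix.diagonal s - Matrix.vecMulVec s s) *ᵥ v)
        ≤ 4 * (1 - s c) * v m ^ 2 := key
      _ ≤ 4 * (1 - s c) * ((∑ i, ∑ j, |v i * v j| ^ p) ^ (1 / p)) :=
          mul_le_mul_of_nonneg_left hnorm hfac
  · -- Schatten p-norm
    set A := Matrix.vecMulVec v v with hA
    have hAH : Aᴴ = A := by
      ext i j; simp [hA, Matrix.conjTranspose_apply, Matrix.vecMulVec_apply, mul_comm]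
    have hMA : Aᴴ * A = (v ⬝ᵥ v) • A := by
      ext i j
      simp [hA, Matrix.mul_apply, Matrix.vecMulVec_apply, Matrix.conjTranspose_apply,
        dotProduct, Finset.sum_mul, Finset.mul_sum]
      congr 1; ext l; ring
    have hHerm := Matrix.isHermitian_conjTranspose_mul_self A
    have hAA : A * A = (v ⬝ᵥ v) • A := by nth_rewrite 1 [← hAH]; exact hMA
    have hMM : (Aᴴ * A) * (Aᴴ * A) = ((v ⬝ᵥ v) ^ 2) • (Aᴴ * A) := by
      rw [hMA, smul_mul_assoc, mul_smul_comm, hAA, smul_smul, smul_smul, smul_smul]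
      congr 1
      ring
    have htrace : ∑ i, hHerm.eigenvalues i = (v ⬝ᵥ v) ^ 2 := by
      rw [← trace_eq_sum_eigs _ hHerm, hMA, Matrix.trace_smul, smul_eq_mul]
      have : A.trace = v ⬝ᵥ v := by
        simp [hA, Matrix.trace, Matrix.diag, Matrix.vecMulVec_apply, dotProduct]
      rw [this, sq]
    -- find a singular value bounding v m ^ 2
    have hexists : ∃ j : Fin k, v m ^ 2 ≤ singularValues A j := by
      by_cases hv : v ⬝ᵥ v = 0
      · refine ⟨c, ?_⟩
        have hvm : v m = 0 := by
          have : v m * v m ≤ ∑ i, v i * v i :=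
            Finset.single_le_sum (fun i _ => mul_self_nonneg (v i)) (Finset.mem_univ m)
          have h0 : (∑ i, v i * v i) = 0 := hv
          nlinarith [mul_self_nonneg (v m)]
        rw [hvm]
        norm_num
        exact Real.sqrt_nonneg _
      · have hvpos : 0 < v ⬝ᵥ v := by
          have hnn : (0:ℝ) ≤ v ⬝ᵥ v := Finset.sum_nonneg fun i _ => mul_self_nonneg (v i)
          exact lt_of_le_of_ne hnn (Ne.symm hv)
        have hsumpos : 0 < ∑ i, hHerm.eigenvalues i := by rw [htrace]; positivity
        obtain ⟨j, -, hj⟩ : ∃ j ∈ Finset.univ, hHerm.eigenvalues j ≠ 0 := by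
          by_contra hcon
          push_neg at hcon
          have : ∑ i, hHerm.eigenvalues i = 0 :=
            Finset.sum_eq_zero fun i hi => hcon i hi
          linarith
        have hj2 : hHerm.eigenvalues j = (v ⬝ᵥ v) ^ 2 := by
          rcases eig_dichotomy _ hHerm _ hMM j with h' | h'
          · exact absurd h' hj
          · exact h'
        refine ⟨j, ?_⟩
        have hσ : singularValues A j = v ⬝ᵥ v := by
          rw [show singularValues A j = Real.sqrt (hHerm.eigenvalues j) from rfl, hj2,
            Real.sqrt_sq hvpos.le]
        rw [hσ]
        calc v m ^ 2 = v m * v m := by ring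
          _ ≤ ∑ i, v i * v i :=
            Finset.single_le_sum (fun i _ => mul_self_nonneg (v i)) (Finset.mem_univ m)
          _ = v ⬝ᵥ v := rfl
    obtain ⟨j, hj⟩ := hexists
    have hσnonneg : ∀ i : Fin k, 0 ≤ singularValues A i := fun i => Real.sqrt_nonneg _
    have hnorm : v m ^ 2 ≤ (∑ i, singularValues A i ^ p) ^ (1 / p) := by
      have h1 : singularValues A j = (singularValues A j ^ p) ^ (1 / p) := by
        rw [one_div, Real.rpow_rpow_inv (hσnonneg j) hp0]
      calc v m ^ 2 ≤ singularValues A j := hj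
        _ = (singularValues A j ^ p) ^ (1 / p) := h1
        _ ≤ (∑ i, singularValues A i ^ p) ^ (1 / p) := by
            apply Real.rpow_le_rpow (Real.rpow_nonneg (hσnonneg j) p) _ (by positivity)
            exact Finset.single_le_sum (fun i _ => Real.rpow_nonneg (hσnonneg i) p)
              (Finset.mem_univ j)
    calc v ⬝ᵥ ((Matrix.diagonal s - Matrix.vecMulVec s s) *ᵥ v)
        ≤ 4 * (1 - s c) * v m ^ 2 := key
      _ ≤ 4 * (1 - s c) * ((∑ i, singularValues A i ^ p) ^ (1 / p)) :=
          mul_le_mul_of_nonneg_left hnorm hfac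
end

section
/- For multiclass data with labels y_i and classifier W, if L(W) := (1/n)∑_i log(1/S_{y_i}(W h_i)) is the cross-entropy loss and G(W) := (1/n)∑_i (1 - S_{y_i}(W h_i)) where S is the softmax map, then G(W) ≤ L(W) and G(W) ≥ L(W) - (n/2)·L(W)², i.e., 1 ≥ G(W)/L(W) ≥ 1 - nL(W)/2. -/
open scoped BigOperators
open Matrix

/-- The softmax map: `S_c(v) = exp(v_c) / ∑_{c'} exp(v_{c'})`. -/
noncomputable def softmax {k : ℕ} (v : Fin k → ℝ) (c : Fin k) : ℝ :=
  Real.exp (v c) / ∑ c', Real.exp (v c')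

/-- The multiclass cross-entropy loss `L(W) = (1/n) ∑_i log (1 / S_{y_i}(W h_i))`. -/
noncomputable def ceLoss {n d k : ℕ} (h : Fin n → Fin d → ℝ) (y : Fin n → Fin k)
    (W : Matrix (Fin k) (Fin d) ℝ) : ℝ :=
  (1 / (n : ℝ)) * ∑ i, Real.log (1 / softmax (W *ᵥ h i) (y i))

/-- The proxy function `G(W) = (1/n) ∑_i (1 - S_{y_i}(W h_i))`. -/
noncomputable def proxyG {n d k : ℕ} (h : Fin n → Fin d → ℝ) (y : Fin n → Fin k)
    (W : Matrix (Fin k) (Fin d) ℝ) : ℝ :=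
  (1 / (n : ℝ)) * ∑ i, (1 - softmax (W *ᵥ h i) (y i))

lemma softmax_pos {k : ℕ} (v : Fin k → ℝ) (c : Fin k) : 0 < softmax v c := by
  apply div_pos (Real.exp_pos _)
  exact Finset.sum_pos (fun c' _ => Real.exp_pos _) ⟨c, Finset.mem_univ c⟩

lemma softmax_le_one {k : ℕ} (v : Fin k → ℝ) (c : Fin k) : softmax v c ≤ 1 := by
  rw [softmax, div_le_one (Finset.sum_pos (fun c' _ => Real.exp_pos _) ⟨c, Finset.mem_univ c⟩)]
  exact Finset.single_le_sum (fun c' _ => (Real.exp_pos _).le) (Finset.mem_univ c)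

lemma key_upper {s : ℝ} (hs : 0 < s) : 1 - s ≤ Real.log (1 / s) := by
  rw [Real.log_div one_ne_zero hs.ne', Real.log_one, zero_sub]
  nlinarith [Real.log_le_sub_one_of_pos hs]

lemma key_lower {s : ℝ} (hs : 0 < s) (hs1 : s ≤ 1) :
    Real.log (1 / s) - Real.log (1 / s) ^ 2 / 2 ≤ 1 - s := by
  set ℓ := Real.log (1 / s) with hℓ
  have hℓ0 : 0 ≤ ℓ := Real.log_nonneg (by rw [le_div_iff₀ hs]; linarith)
  have hse : s = Real.exp (-ℓ) := by
    rw [hℓ, Real.log_div one_ne_zero hs.ne', Real.log_one, zero_sub, neg_neg, Real.exp_log hs]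
  have hq := Real.quadratic_le_exp_of_nonneg hℓ0
  have hep : (0:ℝ) < Real.exp ℓ := Real.exp_pos _
  have : Real.exp (-ℓ) = 1 / Real.exp ℓ := by
    rw [Real.exp_neg]; exact (inv_eq_one_div _)
  rw [hse, this]
  have hu : 0 < 1 / Real.exp ℓ := by positivity
  have huq : (1 / Real.exp ℓ) * (1 + ℓ + ℓ ^ 2 / 2) ≤ 1 := by
    calc (1 / Real.exp ℓ) * (1 + ℓ + ℓ ^ 2 / 2) ≤ (1 / Real.exp ℓ) * Real.exp ℓ :=
          mul_le_mul_of_nonneg_left hq hu.le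
      _ = 1 := by field_simp
  nlinarith [sq_nonneg ℓ, sq_nonneg (ℓ ^ 2), hu, huq]
/-- Properties of the proxy `G` relative to the loss `L`:
`G(W) ≤ L(W)` and `G(W) ≥ L(W) - (n/2) L(W)²`, i.e. `1 ≥ G/L ≥ 1 - n L / 2`. -/
theorem proxyG_le_ceLoss_and_lower_bound {n d k : ℕ} (hn : 0 < n)
    (h : Fin n → Fin d → ℝ) (y : Fin n → Fin k) (W : Matrix (Fin k) (Fin d) ℝ) :
    proxyG h y W ≤ ceLoss h y W ∧
    ceLoss h y W - ((n : ℝ) / 2) * (ceLoss h y W) ^ 2 ≤ proxyG h y W := by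
  have hk : 0 < k := (y ⟨0, hn⟩).pos
  have hnR : (0:ℝ) < n := Nat.cast_pos.mpr hn
  set s : Fin n → ℝ := fun i => softmax (W *ᵥ h i) (y i) with hsdef
  have hsp : ∀ i, 0 < s i := fun i => softmax_pos _ _
  have hs1 : ∀ i, s i ≤ 1 := fun i => softmax_le_one _ _
  set ℓ : Fin n → ℝ := fun i => Real.log (1 / s i) with hℓdef
  have hℓ0 : ∀ i, 0 ≤ ℓ i := fun i =>
    Real.log_nonneg (by rw [le_div_iff₀ (hsp i)]; linarith [hs1 i])
  constructor
  · apply mul_le_mul_of_nonneg_left _ (by positivity)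
    exact Finset.sum_le_sum fun i _ => key_upper (hsp i)
  · have h1 : (1 / (n:ℝ)) * ∑ i, (ℓ i - ℓ i ^ 2 / 2) ≤ proxyG h y W := by
      apply mul_le_mul_of_nonneg_left _ (by positivity)
      exact Finset.sum_le_sum fun i _ => key_lower (hsp i) (hs1 i)
    have h2 : ∑ i, (ℓ i) ^ 2 ≤ (∑ i, ℓ i) ^ 2 := by
      rw [sq (∑ i, ℓ i), Finset.sum_mul_sum]
      apply Finset.sum_le_sum
      intro i _
      rw [sq]
      exact Finset.single_le_sum (f := fun j => ℓ i * ℓ j)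
        (fun j _ => mul_nonneg (hℓ0 i) (hℓ0 j)) (Finset.mem_univ i)
    have hL : ceLoss h y W = (1 / (n:ℝ)) * ∑ i, ℓ i := rfl
    refine le_trans ?_ h1
    rw [hL, Finset.sum_sub_distrib]
    have : ∑ i, (ℓ i)^2 / 2 = (∑ i, (ℓ i)^2) / 2 := by rw [Finset.sum_div]
    rw [this]
    have hstep : ((n:ℝ)/2) * ((1/(n:ℝ)) * ∑ i, ℓ i)^2 ≥ (1/(n:ℝ)) * ((∑ i, (ℓ i)^2)/2) := by
      have : ((n:ℝ)/2) * ((1/(n:ℝ)) * ∑ i, ℓ i)^2 = (1/(n:ℝ)) * ((∑ i, ℓ i)^2 / 2) := by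
        field_simp
      rw [this]
      apply mul_le_mul_of_nonneg_left _ (by positivity)
      linarith
    rw [mul_sub]
    linarith
end

section
/- If either L(W) ≤ (log 2)/n or G(W) ≤ 1/(2n), then L(W) ≤ 2·G(W), where L is the multiclass cross-entropy loss and G(W) = (1/n)∑_i (1 - S_{y_i}(W h_i)). -/
open scoped BigOperators
open Matrix

/-- If either `L(W) ≤ log 2 / n` or `G(W) ≤ 1 / (2n)`, then `L(W) ≤ 2 G(W)`. -/
theorem ceLoss_le_two_proxyG {n d k : ℕ} (hn : 0 < n)
    (h : Fin n → Fin d → ℝ) (y : Fin n → Fin k) (W : Matrix (Fin k) (Fin d) ℝ)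
    (hyp : ceLoss h y W ≤ Real.log 2 / n ∨ proxyG h y W ≤ 1 / (2 * n)) :
    ceLoss h y W ≤ 2 * proxyG h y W := by
  set s : Fin n → ℝ := fun i => softmax (W *ᵥ h i) (y i) with hs
  have hnn : (0:ℝ) < n := Nat.cast_pos.mpr hn
  have hpos : ∀ i, 0 < s i := fun i => softmax_pos _ _
  have hle1 : ∀ i, s i ≤ 1 := fun i => softmax_le_one _ _
  -- show each s i ≥ 1/2
  have hhalf : ∀ i, (1:ℝ)/2 ≤ s i := by
    rcases hyp with hyp | hyp
    · intro i
      have hsum : ∑ j, Real.log (1 / s j) ≤ Real.log 2 := by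
        unfold ceLoss at hyp
        have h2 : (1 / (n:ℝ)) * ∑ j, Real.log (1 / s j) ≤ Real.log 2 / n := hyp
        calc ∑ j, Real.log (1 / s j)
            = n * ((1 / (n:ℝ)) * ∑ j, Real.log (1 / s j)) := by field_simp
          _ ≤ n * (Real.log 2 / n) := mul_le_mul_of_nonneg_left h2 hnn.le
          _ = Real.log 2 := by field_simp
      have hterm : Real.log (1 / s i) ≤ Real.log 2 := by
        refine le_trans (Finset.single_le_sum (f := fun j => Real.log (1 / s j))
          (fun j _ => ?_) (Finset.mem_univ i)) hsum
        apply Real.log_nonneg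
        rw [le_div_iff₀ (hpos j)]
        simpa using hle1 j
      have : (1:ℝ) / s i ≤ 2 := by
        have := Real.exp_le_exp.mpr hterm
        rwa [Real.exp_log (by have := hpos i; positivity), Real.exp_log (by norm_num)] at this
      rw [div_le_iff₀ (hpos i)] at this
      linarith
    · intro i
      have hsum : ∑ j, (1 - s j) ≤ 1/2 := by
        unfold proxyG at hyp
        have h2 : (1 / (n:ℝ)) * ∑ j, (1 - s j) ≤ 1 / (2 * n) := hyp
        calc ∑ j, (1 - s j)
            = n * ((1 / (n:ℝ)) * ∑ j, (1 - s j)) := by field_simp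
          _ ≤ n * (1 / (2 * n)) := mul_le_mul_of_nonneg_left h2 hnn.le
          _ = 1/2 := by field_simp
      have : 1 - s i ≤ 1/2 := by
        refine le_trans (Finset.single_le_sum (f := fun j => 1 - s j)
          (fun j _ => sub_nonneg.mpr (hle1 j)) (Finset.mem_univ i)) hsum
      linarith
  -- per-term bound: log(1/s) ≤ 2(1-s)
  have hterm : ∀ i, Real.log (1 / s i) ≤ 2 * (1 - s i) := by
    intro i
    have h1 : Real.log (1 / s i) ≤ 1 / s i - 1 :=
      Real.log_le_sub_one_of_pos (by have := hpos i; positivity)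
    have h2 : 1 / s i - 1 ≤ 2 * (1 - s i) := by
      have hi := hpos i
      have hh := hhalf i
      rw [div_sub' (ne_of_gt hi), div_le_iff₀ hi]
      nlinarith [mul_nonneg (by linarith : (0:ℝ) ≤ 2 * s i - 1)
        (by linarith [hle1 i] : (0:ℝ) ≤ 1 - s i)]
    linarith
  unfold ceLoss proxyG
  rw [mul_left_comm]
  apply mul_le_mul_of_nonneg_left _ (by positivity)
  calc ∑ i, Real.log (1 / s i) ≤ ∑ i, 2 * (1 - s i) :=
        Finset.sum_le_sum (fun i _ => hterm i)
    _ = 2 * ∑ i, (1 - s i) := by rw [Finset.mul_sum]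
end

section
/- For any vectors v, v' ∈ ℝ^k and any index c, |S_c(v')/S_c(v) - 1| ≤ e^{2‖v - v'‖_∞} - 1, where S is the softmax map. -/
open scoped BigOperators
open Matrix

/-- Softmax ratio bound: `|S_c(v')/S_c(v) - 1| ≤ e^{2 ‖v - v'‖_∞} - 1`. -/
theorem softmax_ratio_bound {k : ℕ} (v v' : Fin k → ℝ) (c : Fin k) :
    |softmax v' c / softmax v c - 1| ≤ Real.exp (2 * ⨆ i, |v i - v' i|) - 1 := by
  set M := ⨆ i, |v i - v' i| with hM
  have hMle : ∀ i, |v i - v' i| ≤ M := fun i =>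
    le_ciSup (f := fun i => |v i - v' i|) (Set.Finite.bddAbove (Set.finite_range _)) i
  have hM0 : 0 ≤ M := le_trans (abs_nonneg _) (hMle c)
  set A := ∑ c', Real.exp (v c') with hAdef
  set B := ∑ c', Real.exp (v' c') with hBdef
  have hA : 0 < A := Finset.sum_pos (fun i _ => Real.exp_pos _) ⟨c, Finset.mem_univ c⟩
  have hB : 0 < B := Finset.sum_pos (fun i _ => Real.exp_pos _) ⟨c, Finset.mem_univ c⟩
  have hAB : A ≤ Real.exp M * B := by
    rw [Finset.mul_sum]
    apply Finset.sum_le_sum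
    intro i _
    rw [← Real.exp_add, Real.exp_le_exp]
    have := (abs_le.1 (hMle i)).2
    linarith
  have hBA : B ≤ Real.exp M * A := by
    rw [Finset.mul_sum]
    apply Finset.sum_le_sum
    intro i _
    rw [← Real.exp_add, Real.exp_le_exp]
    have := (abs_le.1 (hMle i)).1
    linarith
  have hc1 : Real.exp (v' c) ≤ Real.exp M * Real.exp (v c) := by
    rw [← Real.exp_add, Real.exp_le_exp]
    have := (abs_le.1 (hMle c)).1
    linarith
  have hc2 : Real.exp (v c) ≤ Real.exp M * Real.exp (v' c) := by
    rw [← Real.exp_add, Real.exp_le_exp]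
    have := (abs_le.1 (hMle c)).2
    linarith
  have hR : softmax v' c / softmax v c =
      (Real.exp (v' c) * A) / (Real.exp (v c) * B) := by
    unfold softmax
    rw [← hAdef, ← hBdef]
    field_simp
  have hexp2 : Real.exp (2 * M) = Real.exp M * Real.exp M := by
    rw [← Real.exp_add]; ring_nf
  have hupper : softmax v' c / softmax v c ≤ Real.exp (2 * M) := by
    rw [hR, div_le_iff₀ (by positivity)]
    calc Real.exp (v' c) * A ≤ (Real.exp M * Real.exp (v c)) * (Real.exp M * B) :=
          mul_le_mul hc1 hAB hA.le (by positivity)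
      _ = Real.exp (2 * M) * (Real.exp (v c) * B) := by rw [hexp2]; ring
  have hlower : Real.exp (-(2 * M)) ≤ softmax v' c / softmax v c := by
    rw [hR, le_div_iff₀ (by positivity), Real.exp_neg,
      inv_mul_le_iff₀ (Real.exp_pos _)]
    calc Real.exp (v c) * B ≤ (Real.exp M * Real.exp (v' c)) * (Real.exp M * A) :=
          mul_le_mul hc2 hBA hB.le (by positivity)
      _ = Real.exp (2 * M) * (Real.exp (v' c) * A) := by rw [hexp2]; ring
  have h3 : 2 ≤ Real.exp (2 * M) + Real.exp (-(2 * M)) := by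
    have := Real.add_one_le_exp (2 * M)
    have := Real.add_one_le_exp (-(2 * M))
    linarith
  rw [abs_le]
  constructor <;> linarith
end

section
/- For any vectors v, v' ∈ ℝ^k and any index c, |(1 - S_c(v'))/(1 - S_c(v)) - 1| ≤ e^{2‖v - v'‖_∞} - 1, where S is the softmax map. -/
open scoped BigOperators
open Matrix

/-- Complementary softmax ratio bound (for `k ≥ 2`):
`|(1 - S_c(v'))/(1 - S_c(v)) - 1| ≤ e^{2 ‖v - v'‖_∞} - 1`. -/
theorem one_sub_softmax_ratio_bound {k : ℕ} (hk : 2 ≤ k) (v v' : Fin k → ℝ) (c : Fin k) :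
    |(1 - softmax v' c) / (1 - softmax v c) - 1| ≤
      Real.exp (2 * ⨆ i, |v i - v' i|) - 1 := by
  have hkpos : 0 < k := by omega
  set M := ⨆ i, |v i - v' i| with hMdef
  have hbdd : BddAbove (Set.range fun i => |v i - v' i|) :=
    Set.Finite.bddAbove (Set.finite_range _)
  have hM : ∀ i, |v i - v' i| ≤ M := fun i => le_ciSup hbdd i
  have hM0 : 0 ≤ M := le_trans (abs_nonneg _) (hM ⟨0, hkpos⟩)
  have key : ∀ (w w' : Fin k → ℝ), (∀ i, w i - w' i ≤ M) →
      ∀ s : Finset (Fin k), ∑ i ∈ s, Real.exp (w i) ≤ Real.exp M * ∑ i ∈ s, Real.exp (w' i) := by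
    intro w w' h s
    rw [Finset.mul_sum]
    refine Finset.sum_le_sum fun i _ => ?_
    rw [← Real.exp_add]
    exact Real.exp_le_exp.2 (by linarith [h i])
  set T := ∑ i, Real.exp (v i) with hTdef
  set T' := ∑ i, Real.exp (v' i) with hT'def
  set A := ∑ i ∈ Finset.univ.erase c, Real.exp (v i) with hAdef
  set A' := ∑ i ∈ Finset.univ.erase c, Real.exp (v' i) with hA'def
  have hTeq : A + Real.exp (v c) = T := Finset.sum_erase_add _ _ (Finset.mem_univ c)
  have hT'eq : A' + Real.exp (v' c) = T' := Finset.sum_erase_add _ _ (Finset.mem_univ c)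
  have hne : (Finset.univ.erase c).Nonempty := by
    rw [← Finset.card_pos, Finset.card_erase_of_mem (Finset.mem_univ c), Finset.card_univ,
      Fintype.card_fin]
    omega
  have hApos : 0 < A := Finset.sum_pos (fun i _ => Real.exp_pos _) hne
  have hA'pos : 0 < A' := Finset.sum_pos (fun i _ => Real.exp_pos _) hne
  haveI : Nonempty (Fin k) := ⟨⟨0, hkpos⟩⟩
  have hTpos : 0 < T := Finset.sum_pos (fun i _ => Real.exp_pos _) Finset.univ_nonempty
  have hT'pos : 0 < T' := Finset.sum_pos (fun i _ => Real.exp_pos _) Finset.univ_nonempty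
  have h1 : 1 - softmax v c = A / T := by
    rw [softmax]
    field_simp
    rw [← hTdef, ← hTeq]; ring
  have h1' : 1 - softmax v' c = A' / T' := by
    rw [softmax]
    field_simp
    rw [← hT'def, ← hT'eq]; ring
  have hr : (1 - softmax v' c) / (1 - softmax v c) = (A' * T) / (A * T') := by
    rw [h1, h1']
    field_simp
  have hvv' : ∀ i, v i - v' i ≤ M := fun i => le_trans (le_abs_self _) (hM i)
  have hv'v : ∀ i, v' i - v i ≤ M := fun i =>
    le_trans (by rw [abs_sub_comm]; exact le_abs_self _) (hM i)
  have hE : Real.exp (2 * M) = Real.exp M * Real.exp M := by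
    rw [← Real.exp_add]; ring_nf
  set E := Real.exp (2 * M) with hEdef
  have hEpos : 0 < E := Real.exp_pos _
  have hupper : A' * T ≤ E * (A * T') := by
    have h1 := key v' v hv'v (Finset.univ.erase c)
    have h2 := key v v' hvv' Finset.univ
    calc A' * T ≤ (Real.exp M * A) * (Real.exp M * T') :=
          mul_le_mul h1 h2 hTpos.le (by positivity)
      _ = E * (A * T') := by rw [hE]; ring
  have hlower : A * T' ≤ E * (A' * T) := by
    have h1 := key v v' hvv' (Finset.univ.erase c)
    have h2 := key v' v hv'v Finset.univ
    calc A * T' ≤ (Real.exp M * A') * (Real.exp M * T) :=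
          mul_le_mul h1 h2 hT'pos.le (by positivity)
      _ = E * (A' * T) := by rw [hE]; ring
  rw [hr]
  have hden : 0 < A * T' := by positivity
  have hnum : 0 < A' * T := by positivity
  rw [abs_le]
  constructor
  · have hrge : (1 : ℝ) / E ≤ (A' * T) / (A * T') := by
      rw [div_le_div_iff₀ hEpos hden]
      linarith
    have h2E : 2 - E ≤ 1 / E := by
      rw [le_div_iff₀ hEpos]
      nlinarith [sq_nonneg (E - 1)]
    linarith
  · have hrle : (A' * T) / (A * T') ≤ E := by
      rw [div_le_iff₀ hden]
      linarith
    linarith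
end
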